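/- Ad-invariance of the span of Pfaffian-type elements for SO₀(m,n) (Proposition 2-6(1)): Let m ≥ n ≥ 1, N := m+n, p ≥ 1 with 2p ≤ N. For every g in the identity component SO₀(m,n) of the real matrix group {g ∈ GL_N(ℝ) : gᵀ·I_{m,n}·g = I_{m,n}, det g = 1}, conjugation X ↦ g·X·g⁻¹ preserves 𝔤_ℂ and hence induces an algebra automorphism Ad(g) of U(𝔤_ℂ); then for every I ∈ T_{2p}(N) there exist complex numbers a^I_{I'}(g), indexed by I' ∈ T_{2p}(N), such that Ad(g)(W_I) = Σ_{I' ∈ T_{2p}(N)} a^I_{I'}(g)·W_{I'}. In particular Ad(g) maps the ℂ-linear span of {W_I : I ∈ T_{2p}(N)} into itself. -/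

import Mathlib

open scoped Classical Matrix

set_option maxHeartbeats 1000000
set_option synthInstance.maxHeartbeats 400000

attribute [local instance] LieRing.ofAssociativeRing

noncomputable section

namespace SOMN

/-- The matrix I_{m,n} = diag(1_m, −1_n) over ℂ. -/
def Jmn (m n : ℕ) : Matrix (Fin (m+n)) (Fin (m+n)) ℂ :=
  Matrix.diagonal fun i => if (i : ℕ) < m then 1 else -1

/-- 𝔤_ℂ = {X ∈ M_N(ℂ) : Xᵀ I_{m,n} + I_{m,n} X = 0}, the complexification of 𝔰𝔬(m,n). -/
abbrev gC (m n : ℕ) : LieSubalgebra ℂ (Matrix (Fin (m+n)) (Fin (m+n)) ℂ) :=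
  skewAdjointMatricesLieSubalgebra (Jmn m n)

abbrev U (m n : ℕ) := UniversalEnvelopingAlgebra ℂ (gC m n)

def ι {m n : ℕ} (x : gC m n) : U m n := UniversalEnvelopingAlgebra.ι ℂ x

lemma mem_gC {m n : ℕ} (A : Matrix (Fin (m+n)) (Fin (m+n)) ℂ)
    (h : Aᵀ * Jmn m n = -(Jmn m n * A)) : A ∈ gC m n := by
  rw [mem_skewAdjointMatricesLieSubalgebra, mem_skewAdjointMatricesSubmodule]
  show Aᵀ * Jmn m n = Jmn m n * (-A)
  simpa [Matrix.mul_neg] using h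

lemma std_mul_diag {k : ℕ} (d : Fin k → ℂ) (i j : Fin k) (c : ℂ) :
    Matrix.single i j c * Matrix.diagonal d = Matrix.single i j (c * d j) := by
  ext a b
  simp [Matrix.mul_diagonal, Matrix.single]
  aesop

lemma diag_mul_std {k : ℕ} (d : Fin k → ℂ) (i j : Fin k) (c : ℂ) :
    Matrix.diagonal d * Matrix.single i j c = Matrix.single i j (d i * c) := by
  ext a b
  simp [Matrix.diagonal_mul, Matrix.single]
  aesop

lemma transpose_std {k : ℕ} (i j : Fin k) (c : ℂ) :
    (Matrix.single i j c)ᵀ = Matrix.single j i c := by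
  ext a b
  simp [Matrix.transpose_apply, Matrix.single, and_comm]

/-- Membership criterion for a two-entry matrix `a E_{ji} + b E_{ij}`. -/
lemma pair_mem {m n : ℕ} (i j : Fin (m+n)) (a b : ℂ)
    (h : a * (if (j : ℕ) < m then (1:ℂ) else -1) + b * (if (i : ℕ) < m then (1:ℂ) else -1) = 0) :
    a • Matrix.single j i (1:ℂ) + b • Matrix.single i j 1 ∈ gC m n := by
  apply mem_gC
  rw [Matrix.transpose_add, Matrix.transpose_smul, Matrix.transpose_smul,
    transpose_std, transpose_std]
  unfold Jmn
  rw [Matrix.add_mul, Matrix.smul_mul, Matrix.smul_mul, std_mul_diag, std_mul_diag,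
    Matrix.mul_add, Matrix.mul_smul, Matrix.mul_smul, diag_mul_std, diag_mul_std]
  rw [Matrix.smul_single, Matrix.smul_single,
    Matrix.smul_single, Matrix.smul_single]
  have h1 : a * (if (j : ℕ) < m then (1:ℂ) else -1)
      = -(b * (if (i : ℕ) < m then (1:ℂ) else -1)) := by linear_combination h
  have hstdneg : ∀ (p q : Fin (m+n)) (c : ℂ),
      Matrix.single p q (-c) = -Matrix.single p q c := by
    intro p q c
    ext x y
    simp only [Matrix.single, Matrix.neg_apply, Matrix.of_apply]
    split_ifs <;> simp
  simp only [smul_eq_mul, mul_one, one_mul, h1, hstdneg, neg_neg]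
  abel

/-- X̄_{ij}. -/
def Xbar {m n : ℕ} (i j : Fin (m+n)) : gC m n :=
  if h : ((i : ℕ) < m ∧ (j : ℕ) < m) ∨ (m ≤ (i : ℕ) ∧ m ≤ (j : ℕ)) then
    ⟨Matrix.single j i 1 - Matrix.single i j 1, by
      have h2 := pair_mem (m := m) (n := n) i j 1 (-1) (by
        rcases h with ⟨h1, h2⟩ | ⟨h1, h2⟩
        · rw [if_pos h2, if_pos h1]; ring
        · rw [if_neg (by omega), if_neg (by omega)]; ring)
      simpa [sub_eq_add_neg] using h2⟩
  else if hi : (i : ℕ) < m then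
    ⟨(-Complex.I) • (Matrix.single j i 1 + Matrix.single i j 1), by
      have hj : ¬ ((j : ℕ) < m) := by omega
      have h2 := pair_mem (m := m) (n := n) i j (-Complex.I) (-Complex.I) (by
        rw [if_neg hj, if_pos hi]; ring)
      simpa [smul_add] using h2⟩
  else
    ⟨Complex.I • (Matrix.single j i 1 + Matrix.single i j 1), by
      have hj : (j : ℕ) < m := by omega
      have h2 := pair_mem (m := m) (n := n) i j Complex.I Complex.I (by
        rw [if_pos hj, if_neg hi]; ring)
      simpa [smul_add] using h2⟩

/-- Y_{l, N+1−l} (meaningful for `l ≤ n ≤ m`, junk value 0 otherwise). -/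
def Yel {m n : ℕ} (l : Fin (m+n)) : gC m n :=
  if h : (l : ℕ) < n ∧ n ≤ m then
    ⟨Matrix.single l.rev l 1 + Matrix.single l l.rev 1, by
      have hv : ¬ ((l.rev : ℕ) < m) := by rw [Fin.val_rev]; omega
      have hl : (l : ℕ) < m := by omega
      have h2 := pair_mem (m := m) (n := n) l l.rev 1 1 (by
        rw [if_neg hv, if_pos hl]; ring)
      simpa using h2⟩
  else 0

/-- The root vector N_l^q (meaningful for `1 ≤ q ≤ n ≤ m`, `q < l < N+1−q`;
junk value 0 otherwise). -/
def Nel {m n : ℕ} (q l : Fin (m+n)) : gC m n :=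
  if h : (q : ℕ) < n ∧ n ≤ m ∧ (q : ℕ) < (l : ℕ) ∧ (l : ℕ) < (q.rev : ℕ) then
    if hl : (l : ℕ) < m then
      -- N_l^q = Y_{l,N+1−q} + X_{l,q}
      ⟨(Matrix.single q.rev l 1 + Matrix.single l q.rev 1) +
        (Matrix.single q l 1 - Matrix.single l q 1), by
        have hrev : ¬ ((q.rev : ℕ) < m) := by rw [Fin.val_rev]; omega
        have hq : (q : ℕ) < m := by omega
        have e1 := pair_mem (m := m) (n := n) l q.rev 1 1 (by
          rw [if_neg hrev, if_pos hl]; ring)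
        have e2 := pair_mem (m := m) (n := n) l q 1 (-1) (by
          rw [if_pos hq, if_pos hl]; ring)
        simpa [sub_eq_add_neg] using add_mem e1 e2⟩
    else
      -- N_l^q = X_{l,N+1−q} + Y_{l,q}
      ⟨(Matrix.single q.rev l 1 - Matrix.single l q.rev 1) +
        (Matrix.single q l 1 + Matrix.single l q 1), by
        have hrev : ¬ ((q.rev : ℕ) < m) := by rw [Fin.val_rev]; omega
        have hq : (q : ℕ) < m := by omega
        have e1 := pair_mem (m := m) (n := n) l q.rev 1 (-1) (by
          rw [if_neg hrev, if_neg hl]; ring)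
        have e2 := pair_mem (m := m) (n := n) l q 1 1 (by
          rw [if_pos hq, if_neg hl]; ring)
        simpa [sub_eq_add_neg] using add_mem e1 e2⟩
  else 0

def pos0 {p : ℕ} (a : Fin p) : Fin (2*p) := ⟨2*a.1, by have := a.2; omega⟩
def pos1 {p : ℕ} (a : Fin p) : Fin (2*p) := ⟨2*a.1+1, by have := a.2; omega⟩

/-- The set P₊(I) of admissible permutations. -/
def Pplus {N p : ℕ} (f : Fin (2*p) → Fin N) (π : Equiv.Perm (Fin (2*p))) : Prop :=
  (StrictMono fun a : Fin p => f (π (pos0 a))) ∧ ∀ a : Fin p, f (π (pos0 a)) < f (π (pos1 a))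

/-- The Pfaffian-type element W_I attached to a finset of cardinality 2p (0 otherwise). -/
def Wb (m n p : ℕ) (s : Finset (Fin (m+n))) : U m n :=
  if h : s.card = 2*p then
    ∑ π : Equiv.Perm (Fin (2*p)),
      if Pplus (fun a => s.orderEmbOfFin h a) π then
        ((Equiv.Perm.sign π : ℤˣ) : ℤ) •
          (List.ofFn fun a : Fin p =>
            ι (Xbar (s.orderEmbOfFin h (π (pos0 a))) (s.orderEmbOfFin h (π (pos1 a))))).prod
      else 0
  else 0

/-- The central element W_p = Σ_{I ∈ T_{2p}(m+n)} W_I². -/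
def Wcb (m n p : ℕ) : U m n :=
  ∑ I ∈ Finset.univ.filter (fun I : Finset (Fin (m+n)) => I.card = 2*p), (Wb m n p I)^2

/-- W^n_{p'} : the truncated central element supported on indices in {n+1,…,m}. -/
def Wn (m n p' : ℕ) : U m n :=
  if 2*p' ≤ m - n then
    ∑ I ∈ Finset.univ.filter (fun I : Finset (Fin (m+n)) =>
        I.card = 2*p' ∧ ∀ j ∈ I, n ≤ (j : ℕ) ∧ (j : ℕ) < m),
      (Wb m n p' I)^2
  else 0

/-- 𝔫(0)_ℂ : the span of the root vectors N_l^q. -/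
def n0C (m n : ℕ) : Submodule ℂ (gC m n) :=
  Submodule.span ℂ (Set.range fun ql : Fin (m+n) × Fin (m+n) => Nel ql.1 ql.2)

/-- 𝔫(0)_ℂ·U(𝔤_ℂ) : finite sums of products ι(v)·u, v ∈ 𝔫(0)_ℂ. -/
def nUC (m n : ℕ) : Submodule ℂ (U m n) :=
  Submodule.span ℂ {x | ∃ v ∈ n0C m n, ∃ u : U m n, x = ι v * u}

end SOMN

/-!
Write `X̄_{ij} = D⁻¹ (E_{ji} - E_{ij}) D` with `D = diag(1_m, √-1·1_n)`. If
`gᵀ I_{m,n} g = I_{m,n}`, then with `A = D g D⁻¹` one has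
`g X̄_{kl} g⁻¹ = ∑_{u,v} A_{uk} A_{vl} X̄_{uv}`.

Summing over all of `S_{2p}` instead of `P₊(I)` multiplies `W_I` by `2^p p!`: right multiplication
by the hyperoctahedral group (permuting the pairs, swapping inside a pair) leaves each signed term
unchanged, since the `X̄`'s are antisymmetric and those with disjoint indices commute, and every
permutation is uniquely an element of `P₊` times a hyperoctahedral one. Applying `Ad(g)` to the
full sum and expanding multilinearly, the sum over `S_{2p}` collects into minors of `A`, so
`Ad(g) W_I = ∑_{I'} det(A_{I',I}) W_{I'}`.
-/

namespace SOMN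

open Equiv Finset

section PairPositions

variable {p : ℕ}

def pairEquiv : Fin p × Fin 2 ≃ Fin (2 * p) :=
  finProdFinEquiv.trans (finCongr (mul_comm p 2))

lemma pairEquiv_zero (a : Fin p) : pairEquiv (a, 0) = pos0 a :=
  Fin.ext (by simp [pairEquiv, pos0])

lemma pairEquiv_one (a : Fin p) : pairEquiv (a, 1) = pos1 a :=
  Fin.ext (by simp [pairEquiv, pos1]; omega)

lemma pairEquiv_ne_of_ne {a c : Fin p} (h : a ≠ c) (b d : Fin 2) :
    pairEquiv (a, b) ≠ pairEquiv (c, d) :=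
  pairEquiv.injective.ne (by simp [h])

lemma perm_fin_two_eq_one_or_swap (σ : Perm (Fin 2)) : σ = 1 ∨ σ = swap 0 1 := by
  revert σ; decide

lemma perm_fin_two_apply_apply (σ : Perm (Fin 2)) (b : Fin 2) : σ (σ b) = b := by
  rcases perm_fin_two_eq_one_or_swap σ with rfl | rfl
  · rfl
  · exact swap_apply_self 0 1 b

lemma antisymm_apply_perm_fin_two {β M : Type*} [AddGroup M] {w : β → β → M}
    (hw : ∀ i j, w j i = -w i j) (g : Fin 2 → β) (σ : Perm (Fin 2)) :
    w (g (σ 0)) (g (σ 1)) = (Perm.sign σ : ℤ) • w (g 0) (g 1) := by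
  rcases perm_fin_two_eq_one_or_swap σ with rfl | rfl
  · simp
  · rw [swap_apply_left, swap_apply_right, hw, Perm.sign_swap (by decide)]
    simp

def hyperPerm (π : Perm (Fin p)) (ε : Fin p → Perm (Fin 2)) : Perm (Fin (2 * p)) :=
  pairEquiv.permCongr (prodCongrLeft (fun _ => π) * prodCongrRight ε)

@[simp]
lemma hyperPerm_pairEquiv (π : Perm (Fin p)) (ε : Fin p → Perm (Fin 2)) (a : Fin p) (b : Fin 2) :
    hyperPerm π ε (pairEquiv (a, b)) = pairEquiv (π a, ε a b) := by
  simp [hyperPerm, permCongr_apply]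

lemma sign_hyperPerm (π : Perm (Fin p)) (ε : Fin p → Perm (Fin 2)) :
    Perm.sign (hyperPerm π ε) = ∏ a, Perm.sign (ε a) := by
  rw [hyperPerm, Perm.sign_permCongr, map_mul, Perm.sign_prodCongrLeft, Perm.sign_prodCongrRight,
    Fin.prod_univ_two, Int.units_mul_self, one_mul]

lemma pplus_iff_pplus_id {N : ℕ} {f : Fin (2 * p) → Fin N} (hf : StrictMono f)
    (τ : Perm (Fin (2 * p))) : Pplus f τ ↔ Pplus id τ := by
  simp only [Pplus, StrictMono, id, hf.lt_iff_lt]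

lemma min_max_mul_hyperPerm {τ : Perm (Fin (2 * p))} (hτ : ∀ c, τ (pos0 c) < τ (pos1 c))
    (π : Perm (Fin p)) (ε : Fin p → Perm (Fin 2)) (a : Fin p) :
    min ((τ * hyperPerm π ε) (pos0 a)) ((τ * hyperPerm π ε) (pos1 a)) = τ (pos0 (π a)) ∧
      max ((τ * hyperPerm π ε) (pos0 a)) ((τ * hyperPerm π ε) (pos1 a)) = τ (pos1 (π a)) := by
  have h := hτ (π a)
  simp only [Perm.mul_apply, ← pairEquiv_zero, ← pairEquiv_one, hyperPerm_pairEquiv] at h ⊢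
  rcases perm_fin_two_eq_one_or_swap (ε a) with hε | hε <;> simp [hε, h.le]

lemma eq_of_mul_hyperPerm_eq {τ τ' : Perm (Fin (2 * p))} (hτ : Pplus id τ) (hτ' : Pplus id τ')
    {π π' : Perm (Fin p)} {ε ε' : Fin p → Perm (Fin 2)}
    (he : τ * hyperPerm π ε = τ' * hyperPerm π' ε') : τ = τ' ∧ π = π' ∧ ε = ε' := by
  have hmono : StrictMono fun c => τ (pos0 c) := hτ.1
  have hmono' : StrictMono fun c => τ' (pos0 c) := hτ'.1
  have hlt : ∀ c, τ (pos0 c) < τ (pos1 c) := hτ.2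
  have hlt' : ∀ c, τ' (pos0 c) < τ' (pos1 c) := hτ'.2
  -- The pair minima of `τ * hyperPerm π ε` do not depend on `ε`; listed increasingly they are
  -- `τ ∘ pos0`, and the partner maxima are `τ ∘ pos1`.
  have hlow : ∀ a, τ (pos0 (π a)) = τ' (pos0 (π' a)) := fun a => by
    rw [← (min_max_mul_hyperPerm hlt π ε a).1, he, (min_max_mul_hyperPerm hlt' π' ε' a).1]
  have hhigh : ∀ a, τ (pos1 (π a)) = τ' (pos1 (π' a)) := fun a => by
    rw [← (min_max_mul_hyperPerm hlt π ε a).2, he, (min_max_mul_hyperPerm hlt' π' ε' a).2]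
  have h0 : (fun c => τ (pos0 c)) = fun c => τ' (pos0 c) := by
    rw [← hmono.range_inj hmono', ← π.surjective.range_comp (fun c => τ (pos0 c)),
      ← π'.surjective.range_comp (fun c => τ' (pos0 c))]
    exact congrArg Set.range (funext hlow)
  have hπ : π = π' := Equiv.ext fun a => hmono.injective ((hlow a).trans (congrFun h0 _).symm)
  subst hπ
  have hτ : τ = τ' := Equiv.ext fun x => by
    obtain ⟨⟨c, b⟩, rfl⟩ := pairEquiv.surjective x
    fin_cases b
    · simpa [pairEquiv_zero] using congrFun h0 c
    · simpa [pairEquiv_one] using hhigh (π.symm c)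
  subst hτ
  refine ⟨rfl, rfl, funext fun a => Equiv.ext fun b => ?_⟩
  simpa using congrArg (· (pairEquiv (a, b))) (mul_left_cancel he)

lemma exists_mul_hyperPerm_eq (τ : Perm (Fin (2 * p))) :
    ∃ τ₀ π ε, Pplus id τ₀ ∧ τ₀ * hyperPerm π ε = τ := by
  -- Orient every pair increasingly by `ε`, then sort the pairs by their smaller entries.
  set ε : Fin p → Perm (Fin 2) := fun a => if τ (pos0 a) < τ (pos1 a) then 1 else swap 0 1
  set low : Fin p → Fin (2 * p) := fun a => τ (pairEquiv (a, ε a 0))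
  have hlt : ∀ a, low a < τ (pairEquiv (a, ε a 1)) := fun a => by
    by_cases h : τ (pos0 a) < τ (pos1 a)
    · simp [low, ε, h, pairEquiv_zero, pairEquiv_one]
    · have hne : τ (pos1 a) ≠ τ (pos0 a) :=
        τ.injective.ne (by simp [← pairEquiv_zero, ← pairEquiv_one])
      simpa [low, ε, h, pairEquiv_zero, pairEquiv_one] using lt_of_le_of_ne (not_lt.1 h) hne
  have hlow : Function.Injective low := fun a c h =>
    (Prod.ext_iff.1 (pairEquiv.injective (τ.injective h))).1
  set ς := Tuple.sort low
  have hinv : ∀ c b, (hyperPerm ς⁻¹ ε)⁻¹ (pairEquiv (c, b)) = pairEquiv (ς c, ε (ς c) b) := by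
    intro c b
    rw [Perm.inv_eq_iff_eq, hyperPerm_pairEquiv, perm_fin_two_apply_apply]
    simp
  refine ⟨τ * (hyperPerm ς⁻¹ ε)⁻¹, ς⁻¹, ε, ⟨fun a c hac => ?_, fun c => ?_⟩,
    inv_mul_cancel_right _ _⟩
  · simp only [id, Perm.mul_apply, ← pairEquiv_zero, hinv]
    exact (Tuple.monotone_sort low).strictMono_of_injective (hlow.comp ς.injective) hac
  · simp only [id, Perm.mul_apply, ← pairEquiv_zero, ← pairEquiv_one, hinv]
    exact hlt (ς c)

end PairPositions

section PairProducts

variable {p : ℕ} {α M : Type*} [Ring M]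

def pairProd (w : α → α → M) (χ : Fin (2 * p) → α) : M :=
  (List.ofFn fun a => w (χ (pos0 a)) (χ (pos1 a))).prod

def antisymPairProd (w : α → α → M) (f : Fin (2 * p) → α) : M :=
  ∑ τ : Perm (Fin (2 * p)), (Perm.sign τ : ℤ) • pairProd w (f ∘ τ)

structure IsPfaffianFamily (w : α → α → M) : Prop where
  antisymm : ∀ i j, w j i = -w i j
  commute : ∀ i j k l, i ≠ k → i ≠ l → j ≠ k → j ≠ l → Commute (w i j) (w k l)

lemma prod_ofFn_comp_perm {v : Fin p → M} (hv : Pairwise fun a b => Commute (v a) (v b))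
    (π : Perm (Fin p)) : (List.ofFn (v ∘ π)).prod = (List.ofFn v).prod :=
  (π.ofFn_comp_perm v).prod_eq' (List.pairwise_ofFn.2 fun _ _ hab => hv (π.injective.ne hab.ne))

lemma IsPfaffianFamily.pairProd_comp_hyperPerm {w : α → α → M} (hw : IsPfaffianFamily w)
    {χ : Fin (2 * p) → α} (hχ : Function.Injective χ) (π : Perm (Fin p))
    (ε : Fin p → Perm (Fin 2)) :
    pairProd w (χ ∘ hyperPerm π ε) = (∏ a, (Perm.sign (ε a) : ℤ)) • pairProd w χ := by
  set v : Fin p → M := fun c => w (χ (pairEquiv (c, 0))) (χ (pairEquiv (c, 1)))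
  have hterm : (fun a => w ((χ ∘ hyperPerm π ε) (pos0 a)) ((χ ∘ hyperPerm π ε) (pos1 a))) =
      fun a => (Perm.sign (ε a) : ℤ) • v (π a) := funext fun a => by
    simp only [Function.comp_apply, ← pairEquiv_zero, ← pairEquiv_one, hyperPerm_pairEquiv, v]
    exact antisymm_apply_perm_fin_two hw.antisymm (fun b => χ (pairEquiv (π a, b))) (ε a)
  have hv : Pairwise fun a b => Commute (v a) (v b) := fun a b hab =>
    hw.commute _ _ _ _ (hχ.ne (pairEquiv_ne_of_ne hab _ _)) (hχ.ne (pairEquiv_ne_of_ne hab _ _))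
      (hχ.ne (pairEquiv_ne_of_ne hab _ _)) (hχ.ne (pairEquiv_ne_of_ne hab _ _))
  rw [pairProd, hterm, ← MultilinearMap.mkPiAlgebraFin_apply (R := ℤ),
    MultilinearMap.map_smul_univ, MultilinearMap.mkPiAlgebraFin_apply]
  simp only [pairProd, ← pairEquiv_zero, ← pairEquiv_one]
  congr 1
  exact prod_ofFn_comp_perm hv π

theorem IsPfaffianFamily.antisymPairProd_eq_nsmul {N : ℕ} {w : Fin N → Fin N → M}
    (hw : IsPfaffianFamily w) {f : Fin (2 * p) → Fin N} (hf : StrictMono f) :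
    antisymPairProd w f = (2 ^ p * p.factorial) • ∑ τ : Perm (Fin (2 * p)),
      if Pplus f τ then (Perm.sign τ : ℤ) • pairProd w (f ∘ τ) else 0 := by
  set G : Perm (Fin (2 * p)) → M := fun τ => (Perm.sign τ : ℤ) • pairProd w (f ∘ τ)
  have hG : ∀ τ π ε, G (τ * hyperPerm π ε) = G τ := by
    intro τ π ε
    simp only [G]
    rw [Perm.coe_mul, ← Function.comp_assoc,
      hw.pairProd_comp_hyperPerm (hf.injective.comp τ.injective), smul_smul, map_mul,
      sign_hyperPerm, ← Units.coe_prod, ← Units.val_mul, mul_assoc, ← Finset.prod_mul_distrib]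
    simp [Int.units_mul_self]
  have hbij : Function.Bijective
      fun x : {τ // Pplus f τ} × Perm (Fin p) × (Fin p → Perm (Fin 2)) =>
        x.1.1 * hyperPerm x.2.1 x.2.2 := by
    refine ⟨fun x y hxy => ?_, fun τ => ?_⟩
    · obtain ⟨h₁, h₂, h₃⟩ := eq_of_mul_hyperPerm_eq ((pplus_iff_pplus_id hf _).1 x.1.2)
        ((pplus_iff_pplus_id hf _).1 y.1.2) hxy
      exact Prod.ext (Subtype.ext h₁) (Prod.ext h₂ h₃)
    · obtain ⟨τ₀, π, ε, h, rfl⟩ := exists_mul_hyperPerm_eq τ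
      exact ⟨(⟨τ₀, (pplus_iff_pplus_id hf _).2 h⟩, π, ε), rfl⟩
  calc antisymPairProd w f
      = ∑ x : {τ // Pplus f τ} × Perm (Fin p) × (Fin p → Perm (Fin 2)),
          G (x.1.1 * hyperPerm x.2.1 x.2.2) :=
        (Fintype.sum_bijective _ hbij _ _ fun _ => rfl).symm
    _ = ∑ x : {τ // Pplus f τ} × Perm (Fin p) × (Fin p → Perm (Fin 2)), G x.1.1 := by
        simp only [hG]
    _ = (2 ^ p * p.factorial) • ∑ τ : {τ // Pplus f τ}, G τ := by
        simp [Fintype.sum_prod_type, Finset.smul_sum, Fintype.card_perm, mul_comm]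
    _ = _ := by
        rw [← Finset.sum_filter, Finset.sum_subtype (p := fun τ => Pplus f τ) _ (by simp)]

lemma map_antisymPairProd {M' F : Type*} [Ring M'] [FunLike F M M'] [RingHomClass F M M']
    (Φ : F) (w : α → α → M) (f : Fin (2 * p) → α) :
    Φ (antisymPairProd w f) = antisymPairProd (fun i j => Φ (w i j)) f := by
  simp [antisymPairProd, pairProd, map_list_prod, List.map_ofFn, Function.comp_def]

end PairProducts

section Expansion

variable {p : ℕ} {R α M : Type*} [CommRing R] [Ring M] [Algebra R M]

def pairsEquiv : (Fin (2 * p) → α) ≃ (Fin p → α × α) :=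
  (pairEquiv.symm.arrowCongr (Equiv.refl α)).trans
    ((Equiv.curry _ _ _).trans (Equiv.piCongrRight fun _ => finTwoArrowEquiv α))

lemma pairsEquiv_apply (χ : Fin (2 * p) → α) (a : Fin p) :
    pairsEquiv χ a = (χ (pos0 a), χ (pos1 a)) := by
  simp [pairsEquiv, ← pairEquiv_zero, ← pairEquiv_one]

lemma prod_pairs {β : Type*} [CommMonoid β] (g : Fin (2 * p) → β) :
    ∏ s, g s = ∏ a, g (pos0 a) * g (pos1 a) := by
  rw [← pairEquiv.prod_comp, Fintype.prod_prod_type]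
  simp [Fin.prod_univ_two, pairEquiv_zero, pairEquiv_one]

lemma pairProd_of_bilinear [Fintype α] {w w' : α → α → M} (A : Matrix α α R)
    (hw : ∀ k l, w' k l = ∑ u, ∑ v, (A u k * A v l) • w u v) (χ₀ : Fin (2 * p) → α) :
    pairProd w' χ₀ = ∑ χ : Fin (2 * p) → α, (∏ s, A (χ s) (χ₀ s)) • pairProd w χ := by
  have hmk : pairProd w' χ₀ = MultilinearMap.mkPiAlgebraFin R p M fun a =>
      ∑ uv : α × α, (A uv.1 (χ₀ (pos0 a)) * A uv.2 (χ₀ (pos1 a))) • w uv.1 uv.2 := by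
    simp [pairProd, hw, Fintype.sum_prod_type]
  rw [hmk, MultilinearMap.map_sum, ← pairsEquiv.sum_comp]
  refine sum_congr rfl fun χ _ => ?_
  rw [MultilinearMap.map_smul_univ, MultilinearMap.mkPiAlgebraFin_apply, prod_pairs]
  simp [pairsEquiv_apply, pairProd]

lemma antisymPairProd_of_bilinear [Fintype α] {w w' : α → α → M} (A : Matrix α α R)
    (hw : ∀ k l, w' k l = ∑ u, ∑ v, (A u k * A v l) • w u v) (f : Fin (2 * p) → α) :
    antisymPairProd w' f = ∑ χ, (A.submatrix χ f).det • pairProd w χ := by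
  simp only [antisymPairProd, pairProd_of_bilinear A hw, Finset.smul_sum]
  rw [Finset.sum_comm]
  refine sum_congr rfl fun χ _ => ?_
  rw [← Matrix.det_transpose, Matrix.det_apply', Finset.sum_smul]
  refine sum_congr rfl fun τ _ => ?_
  rw [← Int.cast_smul_eq_zsmul R, smul_smul]
  simp

lemma sum_eq_sum_orderEmbOfFin_comp_perm {q : ℕ} {β γ : Type*} [Fintype β] [LinearOrder β]
    [AddCommMonoid γ] (F : (Fin q → β) → γ) (hF : ∀ χ, ¬ Function.Injective χ → F χ = 0) :
    ∑ χ, F χ = ∑ s : {s : Finset β // s.card = q}, ∑ σ : Perm (Fin q),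
      F (s.1.orderEmbOfFin s.2 ∘ σ) := by
  rw [← Fintype.sum_prod_type']
  refine (Fintype.sum_of_injective
    (fun x : {s : Finset β // s.card = q} × Perm (Fin q) => x.1.1.orderEmbOfFin x.1.2 ∘ x.2)
    ?_ _ F ?_ fun _ => rfl).symm
  · rintro ⟨⟨s, hs⟩, σ⟩ ⟨⟨s', hs'⟩, σ'⟩ h
    have hss : s = s' := by
      have := congrArg Set.range h
      simp only [σ.surjective.range_comp, σ'.surjective.range_comp,
        Finset.range_orderEmbOfFin] at this
      exact_mod_cast this
    subst hss
    simp only [Prod.mk.injEq, true_and]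
    exact Equiv.ext fun t => (s.orderEmbOfFin hs).injective (congrFun h t)
  · intro χ hχ
    refine hF χ fun hinj => hχ ?_
    have hs : (univ.image χ).card = q := by simp [card_image_of_injective _ hinj]
    have hsort := orderEmbOfFin_unique hs (by simp)
      ((Tuple.monotone_sort χ).strictMono_of_injective (hinj.comp (Tuple.sort χ).injective))
    refine ⟨(⟨_, hs⟩, (Tuple.sort χ)⁻¹), ?_⟩
    simp only [← hsort]
    ext t
    simp

theorem antisymPairProd_of_bilinear_eq_sum_det [Fintype α] [LinearOrder α] {w w' : α → α → M}
    (A : Matrix α α R) (hw : ∀ k l, w' k l = ∑ u, ∑ v, (A u k * A v l) • w u v)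
    (f : Fin (2 * p) → α) :
    antisymPairProd w' f = ∑ s : {s : Finset α // s.card = 2 * p},
      (A.submatrix (s.1.orderEmbOfFin s.2) f).det • antisymPairProd w (s.1.orderEmbOfFin s.2) := by
  rw [antisymPairProd_of_bilinear A hw, sum_eq_sum_orderEmbOfFin_comp_perm]
  · refine sum_congr rfl fun s _ => ?_
    rw [antisymPairProd, Finset.smul_sum]
    refine sum_congr rfl fun σ _ => ?_
    change ((A.submatrix (s.1.orderEmbOfFin s.2) f).submatrix σ id).det • _ = _
    rw [Matrix.det_permute, mul_comm, mul_smul, Int.cast_smul_eq_zsmul]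
  · intro χ hχ
    obtain ⟨i, j, hij, hne⟩ := Function.not_injective_iff.1 hχ
    rw [Matrix.det_zero_of_row_eq hne (by ext; simp [hij]), zero_smul]

end Expansion

lemma conj_single_sub_single {ι R : Type*} [Fintype ι] [DecidableEq ι] [CommRing R]
    (A : Matrix ι ι R) (k l : ι) :
    A * (Matrix.single l k 1 - Matrix.single k l 1) * Aᵀ =
      ∑ u, ∑ v, (A u k * A v l) • (Matrix.single v u 1 - Matrix.single u v 1) := by
  ext a b
  simp [Matrix.mul_apply, Matrix.sum_apply, Matrix.single_apply, mul_sub, sub_mul, ite_mul,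
    Finset.sum_sub_distrib, ite_and]
  ring

section IndefiniteOrthogonal

variable {m n : ℕ}

def scaleDiag (m n : ℕ) : Matrix (Fin (m+n)) (Fin (m+n)) ℂ :=
  Matrix.diagonal fun i => if (i : ℕ) < m then 1 else Complex.I

def scaleDiagInv (m n : ℕ) : Matrix (Fin (m+n)) (Fin (m+n)) ℂ :=
  Matrix.diagonal fun i => if (i : ℕ) < m then 1 else -Complex.I

lemma scaleDiag_mul_scaleDiagInv : scaleDiag m n * scaleDiagInv m n = 1 := by
  rw [scaleDiag, scaleDiagInv, Matrix.diagonal_mul_diagonal, ← Matrix.diagonal_one]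
  congr 1; funext i; split_ifs <;> simp

lemma scaleDiagInv_mul_scaleDiag : scaleDiagInv m n * scaleDiag m n = 1 := by
  rw [scaleDiag, scaleDiagInv, Matrix.diagonal_mul_diagonal, ← Matrix.diagonal_one]
  congr 1; funext i; split_ifs <;> simp

lemma scaleDiag_mul_scaleDiag : scaleDiag m n * scaleDiag m n = Jmn m n := by
  rw [scaleDiag, Jmn, Matrix.diagonal_mul_diagonal]
  congr 1; funext i; split_ifs <;> simp

lemma scaleDiag_mul_Jmn : scaleDiag m n * Jmn m n = scaleDiagInv m n := by
  rw [scaleDiag, scaleDiagInv, Jmn, Matrix.diagonal_mul_diagonal]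
  congr 1; funext i; split_ifs <;> simp

lemma Jmn_mul_Jmn : Jmn m n * Jmn m n = 1 := by
  rw [Jmn, Matrix.diagonal_mul_diagonal, ← Matrix.diagonal_one]
  congr 1; funext i; split_ifs <;> simp

lemma Xbar_coe (i j : Fin (m+n)) : (Xbar i j : Matrix (Fin (m+n)) (Fin (m+n)) ℂ) =
    scaleDiagInv m n * (Matrix.single j i 1 - Matrix.single i j 1) * scaleDiag m n := by
  rw [Matrix.mul_sub, Matrix.sub_mul, scaleDiagInv, scaleDiag, diag_mul_std, diag_mul_std,
    std_mul_diag, std_mul_diag]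
  by_cases h : ((i : ℕ) < m ∧ (j : ℕ) < m) ∨ (m ≤ (i : ℕ) ∧ m ≤ (j : ℕ))
  · rw [Xbar, dif_pos h]
    rcases h with ⟨hi, hj⟩ | ⟨hi, hj⟩
    · simp [hi, hj]
    · simp [not_lt.2 hi, not_lt.2 hj]
  · by_cases hi : (i : ℕ) < m
    · have hj : ¬ (j : ℕ) < m := by omega
      rw [Xbar, dif_neg h, dif_pos hi]
      simp [hi, hj, smul_add, Matrix.smul_single, sub_eq_add_neg, ← Matrix.single_neg]
    · have hj : (j : ℕ) < m := by omega
      rw [Xbar, dif_neg h, dif_neg hi]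
      simp [hi, hj, smul_add, Matrix.smul_single, sub_eq_add_neg, ← Matrix.single_neg]

lemma Xbar_swap (i j : Fin (m+n)) : Xbar j i = -Xbar i j := by
  ext1
  change _ = -((Xbar i j : gC m n) : Matrix (Fin (m+n)) (Fin (m+n)) ℂ)
  rw [Xbar_coe, Xbar_coe, ← neg_sub, Matrix.mul_neg, Matrix.neg_mul]

lemma Xbar_mul_Xbar_eq_zero {i j k l : Fin (m+n)} (hik : i ≠ k) (hil : i ≠ l) (hjk : j ≠ k)
    (hjl : j ≠ l) :
    (Xbar i j : Matrix (Fin (m+n)) (Fin (m+n)) ℂ) * (Xbar k l : Matrix _ _ ℂ) = 0 := by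
  have hsingle : (Matrix.single j i (1 : ℂ) - Matrix.single i j 1) *
      (Matrix.single l k 1 - Matrix.single k l 1) = 0 := by
    simp [Matrix.sub_mul, Matrix.mul_sub, Matrix.single_mul_single_of_ne, hik, hil, hjk, hjl]
  rw [Xbar_coe, Xbar_coe]
  simp only [Matrix.mul_assoc]
  rw [← Matrix.mul_assoc (scaleDiag m n), scaleDiag_mul_scaleDiagInv, Matrix.one_mul,
    ← Matrix.mul_assoc (Matrix.single j i 1 - _), hsingle, Matrix.zero_mul, Matrix.mul_zero]

lemma isPfaffianFamily_ι_Xbar : IsPfaffianFamily fun i j : Fin (m+n) => ι (Xbar (n := n) i j) where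
  antisymm i j := by
    rw [Xbar_swap, ι, ι, map_neg]
  commute i j k l hik hil hjk hjl := by
    have hlie : ⁅Xbar i j, Xbar k l⁆ = (0 : gC m n) := by
      ext1
      rw [LieSubalgebra.coe_bracket, Ring.lie_def, Xbar_mul_Xbar_eq_zero hik hil hjk hjl,
        Xbar_mul_Xbar_eq_zero hik.symm hjk.symm hil.symm hjl.symm, sub_zero]
      rfl
    rw [commute_iff_lie_eq, ι, ι, ← LieHom.map_lie, hlie, map_zero]

lemma nsmul_Wb_eq_antisymPairProd {p : ℕ} {s : Finset (Fin (m+n))} (hs : s.card = 2 * p) :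
    (2 ^ p * p.factorial) • Wb m n p s =
      antisymPairProd (fun i j => ι (Xbar i j)) (s.orderEmbOfFin hs) := by
  rw [isPfaffianFamily_ι_Xbar.antisymPairProd_eq_nsmul (s.orderEmbOfFin hs).strictMono, Wb,
    dif_pos hs]
  rfl

lemma transpose_mul_Jmn_mul_map_ofReal {g : Matrix (Fin (m+n)) (Fin (m+n)) ℝ}
    (hg : gᵀ * (Matrix.diagonal fun i : Fin (m+n) => if (i : ℕ) < m then (1 : ℝ) else -1) * g =
      Matrix.diagonal fun i : Fin (m+n) => if (i : ℕ) < m then (1 : ℝ) else -1) :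
    (g.map fun x => (x : ℂ))ᵀ * Jmn m n * g.map (fun x => (x : ℂ)) = Jmn m n := by
  have hJ : (Matrix.diagonal fun i : Fin (m+n) => if (i : ℕ) < m then (1 : ℝ) else -1).map
      Complex.ofRealHom = Jmn m n := by
    rw [Matrix.diagonal_map (map_zero _), Jmn]
    congr 1; funext i; split_ifs <;> simp
  have h := congrArg (fun M => M.map Complex.ofRealHom) hg
  simp only [Matrix.map_mul, Matrix.transpose_map, hJ] at h
  exact h

variable {g : Matrix (Fin (m+n)) (Fin (m+n)) ℂ}

lemma inv_eq_of_transpose_mul_Jmn_mul (hg : gᵀ * Jmn m n * g = Jmn m n) :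
    g⁻¹ = Jmn m n * gᵀ * Jmn m n := by
  refine Matrix.inv_eq_left_inv ?_
  simp only [Matrix.mul_assoc] at hg ⊢
  rw [hg, Jmn_mul_Jmn]

lemma conj_mem_gC (hg : gᵀ * Jmn m n * g = Jmn m n) (X : gC m n) :
    g * (X : Matrix (Fin (m+n)) (Fin (m+n)) ℂ) * g⁻¹ ∈ gC m n := by
  have hX : (X : Matrix (Fin (m+n)) (Fin (m+n)) ℂ)ᵀ * Jmn m n = Jmn m n * -X := by
    have h := X.2
    rwa [mem_skewAdjointMatricesLieSubalgebra, mem_skewAdjointMatricesSubmodule] at h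
  have hJX : Jmn m n * (X : Matrix (Fin (m+n)) (Fin (m+n)) ℂ)ᵀ = -(X * Jmn m n) := by
    calc Jmn m n * (X : Matrix (Fin (m+n)) (Fin (m+n)) ℂ)ᵀ
        = Jmn m n * ((X : Matrix (Fin (m+n)) (Fin (m+n)) ℂ)ᵀ * Jmn m n) * Jmn m n := by
          rw [Matrix.mul_assoc, Matrix.mul_assoc, Jmn_mul_Jmn, Matrix.mul_one]
      _ = -(X * Jmn m n) := by
          rw [hX, ← Matrix.mul_assoc, Jmn_mul_Jmn, Matrix.one_mul, Matrix.neg_mul]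
  apply mem_gC
  rw [inv_eq_of_transpose_mul_Jmn_mul hg]
  have hJt : (Jmn m n)ᵀ = Jmn m n := Matrix.diagonal_transpose _
  simp only [Matrix.transpose_mul, Matrix.transpose_transpose, hJt, Matrix.mul_assoc]
  rw [← Matrix.mul_assoc (Jmn m n) (X : Matrix (Fin (m+n)) (Fin (m+n)) ℂ)ᵀ, hJX]
  simp only [Matrix.neg_mul, Matrix.mul_neg, Matrix.mul_assoc]

lemma conj_Xbar (hg : gᵀ * Jmn m n * g = Jmn m n) (k l : Fin (m+n)) :
    g * (Xbar k l : Matrix (Fin (m+n)) (Fin (m+n)) ℂ) * g⁻¹ =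
      ∑ u, ∑ v, ((scaleDiag m n * g * scaleDiagInv m n) u k *
        (scaleDiag m n * g * scaleDiagInv m n) v l) • (Xbar u v : Matrix _ _ ℂ) := by
  set A := scaleDiag m n * g * scaleDiagInv m n
  have hsum : ∑ u, ∑ v, (A u k * A v l) • (Xbar u v : Matrix (Fin (m+n)) (Fin (m+n)) ℂ) =
      scaleDiagInv m n * (A * (Matrix.single l k 1 - Matrix.single k l 1) * Aᵀ) *
        scaleDiag m n := by
    simp only [conj_single_sub_single, Xbar_coe, Matrix.mul_sum, Matrix.sum_mul,
      Matrix.mul_smul, Matrix.smul_mul]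
  have hDt : (scaleDiag m n)ᵀ = scaleDiag m n := Matrix.diagonal_transpose _
  have hDit : (scaleDiagInv m n)ᵀ = scaleDiagInv m n := Matrix.diagonal_transpose _
  rw [hsum, Xbar_coe, inv_eq_of_transpose_mul_Jmn_mul hg]
  simp only [A, Matrix.transpose_mul, hDt, hDit, Matrix.mul_assoc]
  rw [← Matrix.mul_assoc (scaleDiagInv m n) (scaleDiag m n), scaleDiagInv_mul_scaleDiag,
    Matrix.one_mul, scaleDiag_mul_scaleDiag, ← Matrix.mul_assoc (scaleDiag m n) (Jmn m n),
    scaleDiag_mul_Jmn]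

lemma map_ι_Xbar_eq_sum (hg : gᵀ * Jmn m n * g = Jmn m n) {Φ : U m n →ₐ[ℂ] U m n}
    (hΦ : ∀ X : gC m n, ∃ Y : gC m n,
      (Y : Matrix (Fin (m+n)) (Fin (m+n)) ℂ) = g * X * g⁻¹ ∧ Φ (ι X) = ι Y)
    (k l : Fin (m+n)) :
    Φ (ι (Xbar k l)) = ∑ u, ∑ v, ((scaleDiag m n * g * scaleDiagInv m n) u k *
      (scaleDiag m n * g * scaleDiagInv m n) v l) • ι (Xbar u v) := by
  obtain ⟨Y, hY, hΦY⟩ := hΦ (Xbar k l)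
  have hY' : Y = ∑ u, ∑ v, ((scaleDiag m n * g * scaleDiagInv m n) u k *
      (scaleDiag m n * g * scaleDiagInv m n) v l) • Xbar u v := by
    ext1
    rw [hY, conj_Xbar hg]
    simp
  rw [hΦY, hY']
  simp only [ι, map_sum, map_smul]

theorem map_Wb_eq_sum_det {p : ℕ} (hg : gᵀ * Jmn m n * g = Jmn m n) {Φ : U m n →ₐ[ℂ] U m n}
    (hΦ : ∀ X : gC m n, ∃ Y : gC m n,
      (Y : Matrix (Fin (m+n)) (Fin (m+n)) ℂ) = g * X * g⁻¹ ∧ Φ (ι X) = ι Y)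
    {I : Finset (Fin (m+n))} (hI : I.card = 2 * p) :
    Φ (Wb m n p I) = ∑ s : {s : Finset (Fin (m+n)) // s.card = 2 * p},
      ((scaleDiag m n * g * scaleDiagInv m n).submatrix (s.1.orderEmbOfFin s.2)
        (I.orderEmbOfFin hI)).det • Wb m n p s := by
  have hc : ((2 ^ p * p.factorial : ℕ) : ℂ) ≠ 0 := Nat.cast_ne_zero.2 (by positivity)
  apply MulAction.injective₀ hc
  dsimp only
  calc ((2 ^ p * p.factorial : ℕ) : ℂ) • Φ (Wb m n p I)
      = antisymPairProd (fun i j => Φ (ι (Xbar i j))) (I.orderEmbOfFin hI) := by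
        rw [Nat.cast_smul_eq_nsmul, ← map_nsmul, nsmul_Wb_eq_antisymPairProd hI,
          map_antisymPairProd]
    _ = ∑ s : {s : Finset (Fin (m+n)) // s.card = 2 * p},
          ((scaleDiag m n * g * scaleDiagInv m n).submatrix (s.1.orderEmbOfFin s.2)
            (I.orderEmbOfFin hI)).det •
              antisymPairProd (fun i j => ι (Xbar i j)) (s.1.orderEmbOfFin s.2) :=
        antisymPairProd_of_bilinear_eq_sum_det _ (map_ι_Xbar_eq_sum hg hΦ) _
    _ = _ := by
        rw [Finset.smul_sum]
        refine Finset.sum_congr rfl fun s _ => ?_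
        rw [smul_comm, Nat.cast_smul_eq_nsmul, nsmul_Wb_eq_antisymPairProd s.2]

end IndefiniteOrthogonal

end SOMN

open SOMN in
/-- The identity component is the connected component of `1` in the real matrix group
`{g | gᵀ I_{m,n} g = I_{m,n}, det g = 1}`, and `Ad(g)` is any algebra endomorphism `Φ` of
`U(𝔤_ℂ)` extending the conjugation `X ↦ g X g⁻¹` on `𝔤_ℂ`. -/
theorem ad_invariance_pfaffian_span_general
    (m n p : ℕ)
    (g : Matrix (Fin (m+n)) (Fin (m+n)) ℝ)
    (hg : g ∈ connectedComponentIn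
      {h : Matrix (Fin (m+n)) (Fin (m+n)) ℝ |
        hᵀ * (Matrix.diagonal fun i : Fin (m+n) => if (i : ℕ) < m then (1 : ℝ) else -1) * h =
          (Matrix.diagonal fun i : Fin (m+n) => if (i : ℕ) < m then (1 : ℝ) else -1) ∧
        h.det = 1} 1) :
    (∀ X : gC m n,
        (g.map fun x => (x : ℂ)) * (X : Matrix (Fin (m+n)) (Fin (m+n)) ℂ) *
          (g.map fun x => (x : ℂ))⁻¹ ∈ gC m n) ∧
    ∀ (Φ : U m n →ₐ[ℂ] U m n),
      (∀ X : gC m n, ∃ Y : gC m n,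
        (Y : Matrix (Fin (m+n)) (Fin (m+n)) ℂ) =
          (g.map fun x => (x : ℂ)) * (X : Matrix (Fin (m+n)) (Fin (m+n)) ℂ) *
            (g.map fun x => (x : ℂ))⁻¹ ∧
        Φ (ι X) = ι Y) →
      ∀ I : Finset (Fin (m+n)), I.card = 2*p →
        (∃ a : Finset (Fin (m+n)) → ℂ,
          Φ (Wb m n p I) =
            ∑ I' ∈ Finset.univ.filter (fun I' : Finset (Fin (m+n)) => I'.card = 2*p),
              a I' • Wb m n p I') ∧
        Φ (Wb m n p I) ∈ Submodule.span ℂ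
          ((fun I' : Finset (Fin (m+n)) => Wb m n p I') '' {I' | I'.card = 2*p}) := by
  have hrel := transpose_mul_Jmn_mul_map_ofReal (connectedComponentIn_subset _ _ hg).1
  refine ⟨conj_mem_gC hrel, fun Φ hΦ I hI => ?_⟩
  set a : Finset (Fin (m+n)) → ℂ := fun s => if hs : s.card = 2 * p then
    ((scaleDiag m n * (g.map fun x => (x : ℂ)) * scaleDiagInv m n).submatrix
      (s.orderEmbOfFin hs) (I.orderEmbOfFin hI)).det else 0
  have hexp : Φ (Wb m n p I) = ∑ I' ∈ Finset.univ.filter (fun I' => I'.card = 2 * p),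
      a I' • Wb m n p I' := by
    rw [Finset.sum_subtype (p := fun s : Finset (Fin (m+n)) => s.card = 2 * p) _ (by simp),
      map_Wb_eq_sum_det hrel hΦ hI]
    exact Finset.sum_congr rfl fun s _ => by simp only [a, dif_pos s.2]
  refine ⟨⟨a, hexp⟩, hexp ▸ Submodule.sum_mem _ fun I' hI' => Submodule.smul_mem _ _ ?_⟩
  exact Submodule.subset_span ⟨I', (Finset.mem_filter.1 hI').2, rfl⟩

open SOMN in
/-- Ad-invariance of the span of Pfaffian-type elements for SO₀(m,n)
(Proposition 2-6(1)).  The identity component is formalized as the connected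
component of the identity inside the real matrix group
`{g | gᵀ I_{m,n} g = I_{m,n}, det g = 1}`, and `Ad(g)` as any algebra
homomorphism of `U(𝔤_ℂ)` extending the conjugation `X ↦ g X g⁻¹` on `𝔤_ℂ`. -/
theorem ad_invariance_pfaffian_span
    (m n p : ℕ) (hn : 1 ≤ n) (hnm : n ≤ m) (hp : 1 ≤ p) (h2p : 2*p ≤ m + n)
    (g : Matrix (Fin (m+n)) (Fin (m+n)) ℝ)
    (hg : g ∈ connectedComponentIn
      {h : Matrix (Fin (m+n)) (Fin (m+n)) ℝ |
        hᵀ * (Matrix.diagonal fun i : Fin (m+n) => if (i : ℕ) < m then (1 : ℝ) else -1) * h =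
          (Matrix.diagonal fun i : Fin (m+n) => if (i : ℕ) < m then (1 : ℝ) else -1) ∧
        h.det = 1} 1) :
    (∀ X : gC m n,
        (g.map fun x => (x : ℂ)) * (X : Matrix (Fin (m+n)) (Fin (m+n)) ℂ) *
          (g.map fun x => (x : ℂ))⁻¹ ∈ gC m n) ∧
    ∀ (Φ : U m n →ₐ[ℂ] U m n),
      (∀ X : gC m n, ∃ Y : gC m n,
        (Y : Matrix (Fin (m+n)) (Fin (m+n)) ℂ) =
          (g.map fun x => (x : ℂ)) * (X : Matrix (Fin (m+n)) (Fin (m+n)) ℂ) *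
            (g.map fun x => (x : ℂ))⁻¹ ∧
        Φ (ι X) = ι Y) →
      ∀ I : Finset (Fin (m+n)), I.card = 2*p →
        (∃ a : Finset (Fin (m+n)) → ℂ,
          Φ (Wb m n p I) =
            ∑ I' ∈ Finset.univ.filter (fun I' : Finset (Fin (m+n)) => I'.card = 2*p),
              a I' • Wb m n p I') ∧
        Φ (Wb m n p I) ∈ Submodule.span ℂ
          ((fun I' : Finset (Fin (m+n)) => Wb m n p I') '' {I' | I'.card = 2*p}) :=
  ad_invariance_pfaffian_span_general m n p g hg
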